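/- arXiv:1112.1522 — 4 statements merged into one kernel-verified Lean document; each statement's English description precedes it below -/
import Mathlib

section
/- Let G be a finite 2-group, H a subgroup of index 2 in G, and g ∈ G \ H. Suppose 1 → μ₂ → H₂ → H → 1 and 1 → μ₂ → G₁ → G → 1 are central extensions with 2-cocycles f̄ and f respectively, such that [f] = cor_{G/H}([f̄]) where the corestriction is computed by Tate's formula f(s₁,s₂) = f̄(s₁,s₂)·f̄(gs₁g⁻¹, gs₂g⁻¹) for s₁,s₂ ∈ H. Let H₁ be the preimage of H in G₁. Then exp(H₁) ≤ exp(H₂). -/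
lemma pow_aux {G K : Type*} [Group G] [Group K] (ε : K)
    (hc : ∀ x : K, x * ε = ε * x) (hε2 : ε ^ 2 = 1)
    (P : G → Prop) (hPpow : ∀ s, P s → ∀ n : ℕ, P (s ^ n))
    (v : G → K) (F : G → G → ℤˣ) (hv1 : v 1 = 1)
    (hvf : ∀ s₁, P s₁ → ∀ s₂, P s₂ →
      v s₁ * v s₂ = v (s₁ * s₂) * (if F s₁ s₂ = 1 then (1 : K) else ε)) :
    ∀ (n : ℕ) (s : G), P s →
      v s ^ n = v (s ^ n) *
        (if (∏ j ∈ Finset.range n, F (s ^ j) s) = 1 then (1 : K) else ε) := by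
  have hcE : ∀ (a : ℤˣ) (x : K),
      x * (if a = 1 then (1 : K) else ε) = (if a = 1 then (1 : K) else ε) * x := by
    intro a x; split
    · simp
    · exact hc x
  have hemb : ∀ a b : ℤˣ, (if a * b = 1 then (1 : K) else ε)
      = (if a = 1 then (1 : K) else ε) * (if b = 1 then (1 : K) else ε) := by
    intro a b
    rcases Int.units_eq_one_or a with h | h <;> rcases Int.units_eq_one_or b with h' | h' <;>
      simp [h, h', ← pow_two, hε2]
  intro n s hs
  induction n with
  | zero => simp [hv1]
  | succ n ih =>
    rw [pow_succ, ih, Finset.prod_range_succ, hemb, mul_assoc,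
      ← hcE (∏ j ∈ Finset.range n, F (s ^ j) s) (v s), ← mul_assoc,
      hvf (s ^ n) (hPpow s hs n) s hs, ← pow_succ, mul_assoc,
      hcE (∏ j ∈ Finset.range n, F (s ^ j) s) _]



/-- Let `G` be a finite 2-group, `H ≤ G` of index 2, `g ∈ G \ H`.  Given central extensions
`1 → μ₂ → H₂ → H → 1` and `1 → μ₂ → G₁ → G → 1` with 2-cocycles `f̄` (on `H`) and `f`
(on `G`), where `f` restricted to `H × H` is given by Tate's corestriction formula
`f(s₁,s₂) = f̄(s₁,s₂)·f̄(gs₁g⁻¹, gs₂g⁻¹)`, and `H₁` is the preimage of `H` in `G₁`, we have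
`exp(H₁) ≤ exp(H₂)`. -/
theorem stmt2 {G G₁ H₂ : Type*} [Group G] [Finite G] [Group G₁] [Group H₂]
    (hG2 : IsPGroup 2 G)
    (H : Subgroup G) (hind : H.index = 2) (g : G) (hg : g ∉ H)
    -- the central extension 1 → μ₂ → G₁ → G → 1 with cocycle f coming from section u
    (α : G₁ →* G) (hαsurj : Function.Surjective α)
    (ε₁ : G₁) (hε₁cent : ε₁ ∈ Subgroup.center G₁) (hε₁ord : orderOf ε₁ = 2)
    (hkerα : α.ker = Subgroup.zpowers ε₁)
    (f : G → G → ℤˣ)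
    (u : G → G₁) (hu : ∀ s, α (u s) = s) (hu1 : u 1 = 1)
    (huf : ∀ s₁ s₂, u s₁ * u s₂ = u (s₁ * s₂) * (if f s₁ s₂ = 1 then (1 : G₁) else ε₁))
    -- the central extension 1 → μ₂ → H₂ → H → 1 with cocycle f̄ coming from section v
    (β : H₂ →* G) (hβrange : β.range = H)
    (ε₂ : H₂) (hε₂cent : ε₂ ∈ Subgroup.center H₂) (hε₂ord : orderOf ε₂ = 2)
    (hkerβ : β.ker = Subgroup.zpowers ε₂)
    (fbar : G → G → ℤˣ)
    (v : G → H₂) (hv : ∀ s ∈ H, β (v s) = s) (hv1 : v 1 = 1)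
    (hvf : ∀ s₁ ∈ H, ∀ s₂ ∈ H,
      v s₁ * v s₂ = v (s₁ * s₂) * (if fbar s₁ s₂ = 1 then (1 : H₂) else ε₂))
    -- Tate's corestriction formula on H × H
    (htate : ∀ s₁ ∈ H, ∀ s₂ ∈ H,
      f s₁ s₂ = fbar s₁ s₂ * fbar (g * s₁ * g⁻¹) (g * s₂ * g⁻¹)) :
    Monoid.exponent (H.comap α) ≤ Monoid.exponent H₂ := by
  -- basic facts about ε₁, ε₂
  have hε₂sq : ε₂ ^ 2 = 1 := by rw [← hε₂ord]; exact pow_orderOf_eq_one ε₂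
  have hε₁sq : ε₁ ^ 2 = 1 := by rw [← hε₁ord]; exact pow_orderOf_eq_one ε₁
  have hε₂ne : ε₂ ≠ 1 := by
    intro h; rw [h, orderOf_one] at hε₂ord; exact absurd hε₂ord (by norm_num)
  have hε₂c : ∀ x : H₂, x * ε₂ = ε₂ * x := fun x =>
    Subgroup.mem_center_iff.mp hε₂cent x
  have hε₁c : ∀ x : G₁, x * ε₁ = ε₁ * x := fun x =>
    Subgroup.mem_center_iff.mp hε₁cent x
  have hβε₂ : β ε₂ = 1 := by
    have : ε₂ ∈ β.ker := hkerβ ▸ Subgroup.mem_zpowers ε₂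
    exact this
  -- H₂ is finite
  have hfinker : Finite ↥(Subgroup.zpowers ε₂) := by
    have : IsOfFinOrder ε₂ := by
      rw [← orderOf_pos_iff, hε₂ord]; norm_num
    exact Set.Finite.to_subtype this.finite_zpowers
  have hfinH₂ : Finite H₂ := by
    have hmem : ∀ x : H₂, (v (β x))⁻¹ * x ∈ Subgroup.zpowers ε₂ := by
      intro x
      rw [← hkerβ]
      show β ((v (β x))⁻¹ * x) = 1
      rw [map_mul, map_inv, hv (β x) (hβrange ▸ ⟨x, rfl⟩), inv_mul_cancel]
    have hinj : Function.Injective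
        (fun x : H₂ => ((β x, ⟨(v (β x))⁻¹ * x, hmem x⟩) :
          G × ↥(Subgroup.zpowers ε₂))) := by
      intro x y hxy
      simp only [Prod.mk.injEq, Subtype.mk.injEq] at hxy
      obtain ⟨h1, h2⟩ := hxy
      rw [h1] at h2
      exact mul_left_cancel h2
    exact Finite.of_injective _ hinj
  set e := Monoid.exponent H₂ with he
  have hepos : 0 < e := Nat.pos_of_ne_zero Monoid.exponent_ne_zero_of_finite
  have h2e : 2 ∣ e := hε₂ord ▸ Monoid.order_dvd_exponent ε₂
  -- H is normal of index 2: conjugation by g preserves H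
  have hconj : ∀ s ∈ H, g * s * g⁻¹ ∈ H := by
    intro s hs
    have hginv : g⁻¹ ∉ H := fun h => hg ((inv_inv g) ▸ H.inv_mem h)
    have hgs : g * s ∉ H := by
      rw [Subgroup.mul_mem_iff_of_index_two hind]
      simp [hg, hs]
    rw [Subgroup.mul_mem_iff_of_index_two hind]
    simp [hgs, hginv]
  -- the power formula in H₂
  have hvpow := pow_aux ε₂ hε₂c hε₂sq (· ∈ H) (fun s hs n => H.pow_mem hs n)
    v fbar hv1 (fun s₁ h₁ s₂ h₂ => hvf s₁ h₁ s₂ h₂)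
  -- the power formula in G₁
  have hupow := pow_aux ε₁ hε₁c hε₁sq (fun _ => True) (fun _ _ _ => trivial)
    u f hu1 (fun s₁ _ s₂ _ => huf s₁ s₂)
  -- key fact: for s ∈ H, s ^ e = 1 and the fbar-product over range e is 1
  have hkey : ∀ s ∈ H, s ^ e = 1 ∧ (∏ j ∈ Finset.range e, fbar (s ^ j) s) = 1 := by
    intro s hs
    have h1 : v s ^ e = 1 := Monoid.pow_exponent_eq_one (v s)
    rw [hvpow e s hs] at h1
    have hse : s ^ e = 1 := by
      have := congrArg β h1
      rw [map_mul, hv (s ^ e) (H.pow_mem hs e), map_one] at this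
      rcases ite_eq_or_eq ((∏ j ∈ Finset.range e, fbar (s ^ j) s) = 1) (1 : H₂) ε₂ with h | h <;>
        rw [h] at this
      · rwa [map_one, mul_one] at this
      · rwa [hβε₂, mul_one] at this
    refine ⟨hse, ?_⟩
    rw [hse, hv1, one_mul] at h1
    by_contra hne
    rw [if_neg hne] at h1
    exact hε₂ne h1
  -- therefore u s ^ e = 1 for s ∈ H
  have hukey : ∀ s ∈ H, u s ^ e = 1 := by
    intro s hs
    have ht : g * s * g⁻¹ ∈ H := hconj s hs
    obtain ⟨hse, hQs⟩ := hkey s hs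
    obtain ⟨-, hQt⟩ := hkey _ ht
    have hprod : (∏ j ∈ Finset.range e, f (s ^ j) s) = 1 := by
      have : ∀ j ∈ Finset.range e, f (s ^ j) s
          = fbar (s ^ j) s * fbar ((g * s * g⁻¹) ^ j) (g * s * g⁻¹) := by
        intro j _
        rw [htate (s ^ j) (H.pow_mem hs j) s hs, conj_pow]
      rw [Finset.prod_congr rfl this, Finset.prod_mul_distrib, hQs, hQt, one_mul]
    rw [hupow e s trivial, hprod, if_pos rfl, mul_one, hse, hu1]
  -- every element of H₁ = H.comap α satisfies x ^ e = 1
  refine Nat.le_of_dvd hepos (Monoid.exponent_dvd_of_forall_pow_eq_one fun x => ?_)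
  obtain ⟨x, hx⟩ := x
  have hx' : α x ∈ H := hx
  ext
  rw [SubgroupClass.coe_pow, OneMemClass.coe_one]
  -- write x = u (α x) * z with z ∈ ⟨ε₁⟩
  have hz : (u (α x))⁻¹ * x ∈ Subgroup.zpowers ε₁ := by
    rw [← hkerα]
    show α ((u (α x))⁻¹ * x) = 1
    rw [map_mul, map_inv, hu, inv_mul_cancel]
  obtain ⟨k, hk⟩ := hz
  have hxe : x = u (α x) * ε₁ ^ k := by
    rw [show ε₁ ^ k = (u (α x))⁻¹ * x from hk]; group
  have hcomm : Commute (u (α x)) (ε₁ ^ k) :=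
    Commute.zpow_right (hε₁c (u (α x))) k
  have hz2 : (ε₁ ^ k) ^ 2 = 1 := by
    rw [← zpow_natCast (ε₁ ^ k) 2, ← zpow_mul, mul_comm, zpow_mul, zpow_natCast, hε₁sq,
      one_zpow]
  have hze : (ε₁ ^ k) ^ e = 1 := by
    obtain ⟨m, hm⟩ := h2e
    rw [hm, pow_mul, hz2, one_pow]
  show x ^ e = 1
  rw [hxe, hcomm.mul_pow, hukey (α x) hx', hze, one_mul]
end

section
/- For n > 3, none of the four non-abelian groups G₁ of order 2ⁿ having a cyclic subgroup of index 2 (the dihedral group D_{2ⁿ}, the semidihedral group SD_{2ⁿ}, the generalized quaternion group Q_{2ⁿ}, and the modular group M_{2ⁿ}) can arise as a central extension 1 → μ₂ → G₁ → G → 1 whose cohomology class is a corestriction cor_{G/H}([f̄]) from an index-2 subgroup H of G, where G = G₁/μ₂ with μ₂ the unique central subgroup of order 2 contained in the cyclic index-2 subgroup. -/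
open Finset Subgroup

lemma units_pow_even (u : ℤˣ) {M : ℕ} (h : Even M) : u ^ M = 1 := by
  obtain ⟨r, rfl⟩ := h
  rw [pow_add]; exact Int.units_mul_self (u ^ r)

lemma units_pow_odd (u : ℤˣ) {k : ℕ} (h : Odd k) : u ^ k = u := by
  obtain ⟨c, rfl⟩ := h
  rw [pow_add, pow_mul, Int.units_sq, one_pow, one_mul, pow_one]

namespace CorAux

variable {G : Type*} [Group G] {H : Subgroup G} (φ : G → G → ℤˣ) (x : G)

def emul (a b : ℕ × ℤˣ) : ℕ × ℤˣ := (a.1 + b.1, a.2 * b.2 * φ (x ^ a.1) (x ^ b.1))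

def epow (t : ℕ × ℤˣ) : ℕ → ℕ × ℤˣ
  | 0 => (0, 1)
  | (j+1) => emul φ x t (epow t j)

variable {φ x}
variable (hx : x ∈ H)
  (hnorm : ∀ y ∈ H, φ 1 y = 1 ∧ φ y 1 = 1)
  (hcoc : ∀ h₁ ∈ H, ∀ h₂ ∈ H, ∀ h₃ ∈ H,
    φ h₁ h₂ * φ (h₁ * h₂) h₃ = φ h₂ h₃ * φ h₁ (h₂ * h₃))

include hx hcoc in
lemma emul_assoc (a b c : ℕ × ℤˣ) :
    emul φ x (emul φ x a b) c = emul φ x a (emul φ x b c) := by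
  have key := hcoc (x ^ a.1) (pow_mem hx _) (x ^ b.1) (pow_mem hx _) (x ^ c.1) (pow_mem hx _)
  rw [← pow_add, ← pow_add] at key
  have keyv := congrArg Units.val key
  push_cast at keyv
  refine Prod.ext (by simp [emul, add_assoc]) ?_
  show (a.2 * b.2 * φ (x ^ a.1) (x ^ b.1)) * c.2 * φ (x ^ (a.1 + b.1)) (x ^ c.1)
      = a.2 * (b.2 * c.2 * φ (x ^ b.1) (x ^ c.1)) * φ (x ^ a.1) (x ^ (b.1 + c.1))
  rw [Units.ext_iff]
  push_cast
  linear_combination ((a.2 : ℤ) * b.2 * c.2) * keyv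

lemma epow_base : ∀ j, epow φ x (1, 1) j = (j, ∏ i ∈ range j, φ x (x ^ i))
  | 0 => by simp [epow]
  | (j+1) => by
      rw [epow, epow_base j, emul, prod_range_succ]
      exact Prod.ext (by simp [add_comm]) (by simp [pow_one])

lemma epow_gen (k : ℕ) : ∀ j, epow φ x (k, 1) j
    = (k * j, ∏ i ∈ range j, φ (x ^ k) ((x ^ k) ^ i))
  | 0 => by simp [epow]
  | (j+1) => by
      rw [epow, epow_gen k j, emul, prod_range_succ]
      refine Prod.ext (by simp; ring) ?_
      simp [← pow_mul]

include hx hnorm hcoc in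
lemma epow_add (t : ℕ × ℤˣ) (i j : ℕ) :
    epow φ x t (i + j) = emul φ x (epow φ x t i) (epow φ x t j) := by
  induction i with
  | zero =>
      have h1 : φ 1 (x ^ (epow φ x t j).1) = 1 := (hnorm _ (pow_mem hx _)).1
      simp [epow, emul, h1]
  | succ i ih =>
      have : i + 1 + j = (i + j) + 1 := by omega
      rw [this, epow, ih, ← emul_assoc hx hcoc]
      rfl

include hx hnorm hcoc in
lemma epow_mul (t : ℕ × ℤˣ) (i j : ℕ) :
    epow φ x t (i * j) = epow φ x (epow φ x t i) j := by
  induction j with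
  | zero => rfl
  | succ j ih =>
      have : i * (j + 1) = i + i * j := by ring
      rw [this, epow_add hx hnorm hcoc, ih]
      rfl

lemma epow_scalar (t : ℕ × ℤˣ) (e : ℤˣ) (j : ℕ) :
    epow φ x (t.1, t.2 * e) j = ((epow φ x t j).1, (epow φ x t j).2 * e ^ j) := by
  induction j with
  | zero => simp [epow]
  | succ j ih =>
      rw [epow, ih, epow]
      refine Prod.ext rfl ?_
      show (t.2 * e) * ((epow φ x t j).2 * e ^ j) * φ (x ^ t.1) (x ^ (epow φ x t j).1)
        = (t.2 * (epow φ x t j).2 * φ (x ^ t.1) (x ^ (epow φ x t j).1)) * e ^ (j + 1)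
      rw [Units.ext_iff]; push_cast; ring

include hx hnorm in
lemma epow_top (e : ℤˣ) (M : ℕ) (hxM : x ^ M = 1) (c : ℕ) :
    epow φ x (M, e) c = (M * c, e ^ c) := by
  induction c with
  | zero => simp [epow]
  | succ c ih =>
      rw [epow, ih, emul]
      have h1 : φ (x ^ M) (x ^ (M * c)) = 1 := by
        rw [hxM]; exact (hnorm _ (pow_mem hx _)).1
      refine Prod.ext (by simp; ring) ?_
      show e * e ^ c * φ (x ^ M) (x ^ (M * c)) = e ^ (c + 1)
      rw [h1, mul_one, ← pow_succ']

include hx hnorm hcoc in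
lemma prod_conj_pow (M k : ℕ) (hM : Even M) (hxM : x ^ M = 1) (hk : Odd k) :
    (∏ i ∈ range M, φ (x ^ k) ((x ^ k) ^ i)) = ∏ i ∈ range M, φ x (x ^ i) := by
  set A := ∏ i ∈ range M, φ x (x ^ i) with hA
  set d := ∏ i ∈ range k, φ x (x ^ i) with hd
  have h1 : epow φ x (1, 1) k = (k, d) := epow_base k
  have h2 : ((k : ℕ), (1 : ℤˣ)) = ((epow φ x (1,1) k).1, (epow φ x (1,1) k).2 * d⁻¹) := by
    rw [h1]; simp
  have h3 : epow φ x (k, 1) M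
      = ((epow φ x (epow φ x (1,1) k) M).1, (epow φ x (epow φ x (1,1) k) M).2 * (d⁻¹) ^ M) := by
    rw [h2]; exact epow_scalar _ _ _
  rw [← epow_mul hx hnorm hcoc] at h3
  have hkM : k * M = M * k := by ring
  have h4 : epow φ x (1,1) (k * M) = (M * k, A) := by
    rw [hkM, epow_mul hx hnorm hcoc, epow_base M, hA, epow_top hx hnorm _ M hxM k,
      units_pow_odd _ hk]
  rw [h4] at h3
  rw [units_pow_even _ hM, mul_one] at h3
  have h5 := epow_gen (φ := φ) (x := x) k M
  rw [h3] at h5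
  have := congrArg Prod.snd h5
  exact this.symm

end CorAux

/-- For `n > 3`, none of the four non-abelian groups of order `2ⁿ` with a cyclic subgroup of
index 2 (dihedral, semidihedral, generalized quaternion, modular) can arise as a central
extension `1 → μ₂ → G₁ → G → 1` (with `μ₂ = ⟨σ^(2^(n-2))⟩` the unique central order-2
subgroup of the cyclic index-2 subgroup `⟨σ⟩`) whose cohomology class is a corestriction
`cor_{G/H}([f̄])`, computed by Tate's formula, from an index-2 subgroup `H ≤ G`. -/
theorem stmt4 (n : ℕ) (hn : 3 < n) {G₁ : Type} [Group G₁] [Finite G₁]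
    (σ τ : G₁)
    (hcard : Nat.card G₁ = 2 ^ n)
    (hgen : Subgroup.closure {σ, τ} = ⊤)
    (hordσ : orderOf σ = 2 ^ (n - 1))
    (hrel : (σ ^ (2 ^ (n - 1)) = 1 ∧ τ ^ 2 = 1 ∧ τ * σ = σ⁻¹ * τ) ∨
            (σ ^ (2 ^ (n - 1)) = 1 ∧ τ ^ 2 = 1 ∧ τ * σ = σ ^ (2 ^ (n - 2) - 1) * τ) ∨
            (σ ^ (2 ^ (n - 1)) = 1 ∧ τ ^ 2 = σ ^ (2 ^ (n - 2)) ∧ τ * σ = σ⁻¹ * τ) ∨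
            (σ ^ (2 ^ (n - 1)) = 1 ∧ τ ^ 2 = 1 ∧ τ * σ = σ ^ (2 ^ (n - 2) + 1) * τ))
    (hnonab : ¬ ∀ a b : G₁, a * b = b * a) :
    ∀ (G : Type) [Group G], ∀ π : G₁ →* G,
      Function.Surjective π → π.ker = Subgroup.zpowers (σ ^ (2 ^ (n - 2))) →
      ¬ ∃ (H : Subgroup G) (g : G) (fbar f : G → G → ℤˣ) (u : G → G₁),
        H.index = 2 ∧ g ∉ H ∧
        -- f̄ is a normalized 2-cocycle on H
        (∀ x ∈ H, fbar 1 x = 1 ∧ fbar x 1 = 1) ∧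
        (∀ h₁ ∈ H, ∀ h₂ ∈ H, ∀ h₃ ∈ H,
          fbar h₁ h₂ * fbar (h₁ * h₂) h₃ = fbar h₂ h₃ * fbar h₁ (h₂ * h₃)) ∧
        -- f is the corestriction of f̄ via Tate's formula
        (∀ s₁ ∈ H, ∀ s₂ ∈ H,
          f s₁ s₂ = fbar s₁ s₂ * fbar (g * s₁ * g⁻¹) (g * s₂ * g⁻¹)) ∧
        (∀ s₁ s₂, s₁ ∉ H → s₂ ∈ H →
          f s₁ s₂ = fbar (s₁ * g⁻¹) (g * s₂ * g⁻¹) * fbar (g * s₁) s₂) ∧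
        (∀ s₁ s₂, s₁ ∈ H → s₂ ∉ H →
          f s₁ s₂ = fbar s₁ (s₂ * g⁻¹) * fbar (g * s₁ * g⁻¹) (g * s₂)) ∧
        (∀ s₁ s₂, s₁ ∉ H → s₂ ∉ H →
          f s₁ s₂ = fbar (s₁ * g⁻¹) (g * s₂) * fbar (g * s₁) (s₂ * g⁻¹)) ∧
        -- f is the 2-cocycle of the extension 1 → μ₂ → G₁ → G → 1, via the section u
        (∀ x, π (u x) = x) ∧ u 1 = 1 ∧
        (∀ s₁ s₂, u s₁ * u s₂ =
          u (s₁ * s₂) * (if f s₁ s₂ = 1 then (1 : G₁) else σ ^ (2 ^ (n - 2)))) := by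
  intro G _ π hsurj hker
  rintro ⟨H, g, fbar, f, u, hind, hgH, hnorm, hcoc, hTin, -, -, -, hπu, hu1, hmul⟩
  obtain ⟨a, rfl⟩ : ∃ a, n = a + 4 := ⟨n - 4, by omega⟩
  simp only [show a + 4 - 1 = a + 3 from rfl, show a + 4 - 2 = a + 2 from rfl]
    at hordσ hmul hker
  set z := σ ^ 2 ^ (a + 2) with hzdef
  set s := π σ with hsdef
  -- basic facts about z
  have hz2 : z * z = 1 := by
    rw [hzdef, ← pow_add, show 2 ^ (a+2) + 2 ^ (a+2) = 2 ^ (a+3) by ring, ← hordσ,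
      pow_orderOf_eq_one]
  have hz1 : z ≠ 1 := by
    intro h
    have hdvd : 2 ^ (a+3) ∣ 2 ^ (a+2) := hordσ ▸ orderOf_dvd_of_pow_eq_one h
    have hle : (2:ℕ) ^ (a+3) ≤ 2 ^ (a+2) := Nat.le_of_dvd (by positivity) hdvd
    have hlt : (2:ℕ) ^ (a+2) < 2 ^ (a+3) := Nat.pow_lt_pow_right one_lt_two (by omega)
    omega
  have hz2' : z ^ (2:ℤ) = 1 := by
    rw [show (2:ℤ) = ((2:ℕ):ℤ) from rfl, zpow_natCast, pow_two, hz2]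
  have hgen2 : ∀ t : ℤ, z ^ t * z ^ t = 1 := by
    intro t
    rw [← zpow_add, ← two_mul, zpow_mul, hz2', one_zpow]
  have hzker : π z = 1 := by
    have : z ∈ π.ker := by rw [hker]; exact Subgroup.mem_zpowers z
    exact MonoidHom.mem_ker.mp this
  have hs_pow : s ^ 2 ^ (a + 2) = 1 := by rw [hsdef, ← map_pow, ← hzdef, hzker]
  have hs_ne : s ^ 2 ^ (a + 1) ≠ 1 := by
    intro h
    have hmem : σ ^ 2 ^ (a + 1) ∈ π.ker := MonoidHom.mem_ker.mpr (by rw [map_pow, ← hsdef, h])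
    rw [hker] at hmem
    obtain ⟨t, ht⟩ := Subgroup.mem_zpowers_iff.mp hmem
    have h1 : (σ ^ 2 ^ (a+1)) * (σ ^ 2 ^ (a+1)) = z := by
      rw [← pow_add, hzdef]; congr 1; ring
    have : z = 1 := by rw [← h1, ← ht, hgen2 t]
    exact hz1 this
  have hords : orderOf s = 2 ^ (a + 2) := orderOf_eq_prime_pow hs_ne hs_pow
  have hordz : orderOf z = 2 := orderOf_eq_prime (by rw [pow_two, hz2]) hz1
  -- cardinality of G
  have hcardG : Nat.card G = 2 ^ (a + 3) := by
    have e0 := Subgroup.card_eq_card_quotient_mul_card_subgroup π.ker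
    have e1 : Nat.card (G₁ ⧸ π.ker) = Nat.card G :=
      Nat.card_congr (QuotientGroup.quotientKerEquivOfSurjective π hsurj).toEquiv
    have e2 : Nat.card π.ker = 2 := by rw [hker, Nat.card_zpowers, hordz]
    rw [e1, e2, hcard] at e0
    have h2 : (2:ℕ) ^ (a + 4) = 2 ^ (a + 3) * 2 := by ring
    exact Nat.eq_of_mul_eq_mul_right (by norm_num) (e0.symm.trans h2)
  -- the cyclic subgroup generated by s has index 2
  have hK : (Subgroup.zpowers s).index = 2 := by
    have h1 := Subgroup.card_mul_index (Subgroup.zpowers s)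
    rw [Nat.card_zpowers, hords, hcardG,
      show (2:ℕ) ^ (a+3) = 2 ^ (a+2) * 2 by ring] at h1
    exact Nat.eq_of_mul_eq_mul_left (by positivity) h1
  -- the conjugate of s lies in ⟨s⟩
  have hcj : g * s * g⁻¹ ∈ Subgroup.zpowers s := by
    rw [Subgroup.mul_mem_iff_of_index_two hK, Subgroup.mul_mem_iff_of_index_two hK,
      Subgroup.inv_mem_iff]
    simp [Subgroup.mem_zpowers s]
  obtain ⟨t0, ht0⟩ := Subgroup.mem_zpowers_iff.mp hcj
  have hnatk : ∃ k : ℕ, s ^ k = g * s * g⁻¹ := by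
    refine ⟨(t0 % (2 ^ (a+2) : ℤ)).toNat, ?_⟩
    have hmod : (((t0 % (2 ^ (a+2) : ℤ)).toNat : ℤ)) = t0 % (2 ^ (a+2) : ℤ) :=
      Int.toNat_of_nonneg (Int.emod_nonneg t0 (by positivity))
    rw [← zpow_natCast, hmod, ← ht0]
    conv_rhs => rw [← Int.emod_add_mul_ediv t0 (2 ^ (a+2) : ℤ)]
    rw [zpow_add, zpow_mul,
      show ((2:ℤ) ^ (a+2)) = ((2 ^ (a+2) : ℕ) : ℤ) by push_cast; ring,
      zpow_natCast, hs_pow, one_zpow, mul_one]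
  obtain ⟨k, hk⟩ := hnatk
  have hkodd : Odd k := by
    rcases Nat.even_or_odd k with he | ho
    · exfalso
      obtain ⟨c, hc⟩ := he
      have h1 : (g * s * g⁻¹) ^ (2 ^ (a+1)) = 1 := by
        rw [← hk, ← pow_mul, hc, show (c + c) * 2 ^ (a+1) = 2 ^ (a+2) * c by ring,
          pow_mul, hs_pow, one_pow]
      rw [conj_pow] at h1
      have h2 : s ^ 2 ^ (a+1) = 1 := by
        have h3 := congrArg (fun y => g⁻¹ * y * g) h1
        simpa [mul_assoc] using h3
      exact hs_ne h2
    · exact ho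
  -- unified setup: x ∈ H of even order with lift w, w^M = z, conjugation by g is x ↦ x^k
  obtain ⟨x, w, M, hxH, hπw, hwM, hxM, hMeven, hconj, hwz⟩ :
      ∃ (x : G) (w : G₁) (M : ℕ), x ∈ H ∧ π w = x ∧ w ^ M = z ∧ x ^ M = 1 ∧ Even M ∧
        g * x * g⁻¹ = x ^ k ∧ Commute w z := by
    by_cases hs : s ∈ H
    · exact ⟨s, σ, 2 ^ (a+2), hs, hsdef.symm, hzdef.symm, hs_pow, ⟨2 ^ (a+1), by ring⟩,
        hk.symm, (Commute.refl σ).pow_right _⟩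
    · refine ⟨s * s, σ * σ, 2 ^ (a+1), ?_, ?_, ?_, ?_, ⟨2 ^ a, by ring⟩, ?_, ?_⟩
      · exact (Subgroup.mul_mem_iff_of_index_two hind).mpr Iff.rfl
      · rw [map_mul, ← hsdef]
      · rw [show σ * σ = σ ^ 2 from (pow_two σ).symm, ← pow_mul, hzdef]
        congr 1; ring
      · rw [show s * s = s ^ 2 from (pow_two s).symm, ← pow_mul,
          show 2 * 2 ^ (a+1) = 2 ^ (a+2) by ring, hs_pow]
      · have h1 : g * (s * s) * g⁻¹ = (g * s * g⁻¹) * (g * s * g⁻¹) := by group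
        rw [h1, ← hk, ← pow_add, show s * s = s ^ 2 from (pow_two s).symm, ← pow_mul]
        congr 1; ring
      · exact Commute.mul_left ((Commute.refl σ).pow_right _) ((Commute.refl σ).pow_right _)
  -- Step 1: the product of the extension cocycle over powers of x is -1
  set ζ : ℤˣ → G₁ := fun e => if e = 1 then 1 else z with hζ
  have hζmul : ∀ e₁ e₂ : ℤˣ, ζ e₁ * ζ e₂ = ζ (e₁ * e₂) := by
    intro e₁ e₂
    rcases Int.units_eq_one_or e₁ with rfl | rfl <;>
      rcases Int.units_eq_one_or e₂ with rfl | rfl <;>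
      simp [hζ, hz2]
  have hmul' : ∀ s₁ s₂, u s₁ * u s₂ = u (s₁ * s₂) * ζ (f s₁ s₂) := by
    intro s₁ s₂
    simp only [hζ]
    exact hmul s₁ s₂
  have key1 : ∀ jn : ℕ,
      (u x) ^ jn = u (x ^ jn) * ζ (∏ i ∈ Finset.range jn, f x (x ^ i)) := by
    intro jn
    induction jn with
    | zero => simp [hu1, hζ]
    | succ j ih =>
        rw [pow_succ', ih, ← mul_assoc, hmul' x (x ^ j), mul_assoc, hζmul,
          ← pow_succ' x j, Finset.prod_range_succ, mul_comm (f x (x ^ j)) _]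
  have key2 : (u x) ^ M = z := by
    have h1 : π (u x * w⁻¹) = 1 := by
      rw [map_mul, map_inv, hπu, hπw, mul_inv_cancel]
    have h2 : u x * w⁻¹ ∈ π.ker := MonoidHom.mem_ker.mpr h1
    rw [hker] at h2
    obtain ⟨t, ht⟩ := Subgroup.mem_zpowers_iff.mp h2
    have hux : u x = z ^ t * w := by
      rw [ht, inv_mul_cancel_right]
    have hc : Commute (z ^ t) w := (hwz.symm.zpow_left t)
    rw [hux, hc.mul_pow]
    have h3 : (z ^ t) ^ M = 1 := by
      obtain ⟨r, hr⟩ := hMeven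
      have h4 : (z ^ t) ^ r = z ^ (t * (r:ℤ)) := by rw [zpow_mul, zpow_natCast]
      rw [hr, pow_add, h4, hgen2]
    rw [h3, one_mul, hwM]
  set F := ∏ i ∈ Finset.range M, f x (x ^ i) with hF
  have key3 : ζ F = z := by
    have h5 := key1 M
    rw [hxM, hu1, one_mul, ← hF] at h5
    rw [← h5, key2]
  have hFneg : F = -1 := by
    rcases Int.units_eq_one_or F with h | h
    · exfalso
      have hzz : (1:G₁) = z := by rw [← key3, h]; simp [hζ]
      exact hz1 hzz.symm
    · exact h
  -- Step 2: by Tate's formula the same product is a square, hence 1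
  have hT : ∀ i : ℕ, f x (x ^ i) = fbar x (x ^ i) * fbar (x ^ k) ((x ^ k) ^ i) := by
    intro i
    rw [hTin x hxH (x ^ i) (pow_mem hxH i)]
    congr 1
    rw [← conj_pow, hconj]
  have hsplit : F = (∏ i ∈ Finset.range M, fbar x (x ^ i)) *
      (∏ i ∈ Finset.range M, fbar (x ^ k) ((x ^ k) ^ i)) := by
    rw [hF, ← Finset.prod_mul_distrib]
    exact Finset.prod_congr rfl fun i _ => hT i
  have hone : F = 1 := by
    rw [hsplit, CorAux.prod_conj_pow hxH hnorm hcoc M k hMeven hxM hkodd]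
    exact Int.units_mul_self _
  rw [hFneg] at hone
  exact absurd hone (by decide)
end

section
/- Let G be a finite group and H ≤ G of index 2, with g ∈ G \ H. Given a normalized 2-cocycle f̄ ∈ Z²(H, μ₂), the map f : G × G → μ₂ defined by Tate's formula (f(s₁,s₂) = f̄(s₁,s₂)f̄(gs₁g⁻¹,gs₂g⁻¹) if s₁,s₂ ∈ H; f(s₁,s₂) = f̄(s₁g⁻¹, gs₂g⁻¹)f̄(gs₁, s₂) if s₁ ∈ Hg, s₂ ∈ H; f(s₁,s₂) = f̄(s₁, s₂g⁻¹)f̄(gs₁g⁻¹, gs₂) if s₁ ∈ H, s₂ ∈ Hg; f(s₁,s₂) = f̄(s₁g⁻¹, gs₂)f̄(gs₁, s₂g⁻¹) if s₁,s₂ ∈ Hg) is a 2-cocycle on G with values in μ₂. -/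
open scoped Classical in
/-- coset representative: `1` if `x ∈ H`, else `g`. -/
noncomputable def tateRho {G : Type*} [Group G] (H : Subgroup G) (g x : G) : G :=
  if x ∈ H then 1 else g

open scoped Classical in
/-- the `r`-indexed term of the corestriction formula. -/
noncomputable def tateT {G : Type*} [Group G] (H : Subgroup G) (g : G)
    (fbar : G → G → ℤˣ) (r s₁ s₂ : G) : ℤˣ :=
  fbar (r * s₁ * (tateRho H g (r * s₁))⁻¹)
       (tateRho H g (r * s₁) * s₂ * (tateRho H g (r * s₁ * s₂))⁻¹)

lemma tateRho_congr {G : Type*} [Group G] (H : Subgroup G) (g : G) {x y : G}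
    (h : x ∈ H ↔ y ∈ H) : tateRho H g x = tateRho H g y := by
  unfold tateRho
  by_cases hx : x ∈ H
  · rw [if_pos hx, if_pos (h.mp hx)]
  · rw [if_neg hx, if_neg (fun hy => hx (h.mpr hy))]

/-- Let `H ≤ G` have index 2 and `g ∈ G \ H`.  Given a normalized 2-cocycle `f̄` on `H` with
values in `μ₂` (trivial action), the map `f : G × G → μ₂` defined by Tate's formula is a
2-cocycle on `G`. -/
theorem stmt8 {G : Type*} [Group G]
    (H : Subgroup G) (hind : H.index = 2) (g : G) (hg : g ∉ H)
    (fbar : G → G → ℤˣ)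
    -- f̄ is a normalized 2-cocycle on H
    (hnorm : ∀ x ∈ H, fbar 1 x = 1 ∧ fbar x 1 = 1)
    (hcocycle : ∀ h₁ ∈ H, ∀ h₂ ∈ H, ∀ h₃ ∈ H,
      fbar h₁ h₂ * fbar (h₁ * h₂) h₃ = fbar h₂ h₃ * fbar h₁ (h₂ * h₃))
    -- f is defined by Tate's formula
    (f : G → G → ℤˣ)
    (hHH : ∀ s₁ ∈ H, ∀ s₂ ∈ H,
      f s₁ s₂ = fbar s₁ s₂ * fbar (g * s₁ * g⁻¹) (g * s₂ * g⁻¹))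
    (hgH : ∀ s₁ s₂, s₁ ∉ H → s₂ ∈ H →
      f s₁ s₂ = fbar (s₁ * g⁻¹) (g * s₂ * g⁻¹) * fbar (g * s₁) s₂)
    (hHg : ∀ s₁ s₂, s₁ ∈ H → s₂ ∉ H →
      f s₁ s₂ = fbar s₁ (s₂ * g⁻¹) * fbar (g * s₁ * g⁻¹) (g * s₂))
    (hgg : ∀ s₁ s₂, s₁ ∉ H → s₂ ∉ H →
      f s₁ s₂ = fbar (s₁ * g⁻¹) (g * s₂) * fbar (g * s₁) (s₂ * g⁻¹)) :
    ∀ s₁ s₂ s₃ : G,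
      f s₁ s₂ * f (s₁ * s₂) s₃ = f s₂ s₃ * f s₁ (s₂ * s₃) := by
  have hmul : ∀ a b : G, a * b ∈ H ↔ (a ∈ H ↔ b ∈ H) :=
    fun a b => Subgroup.mul_mem_iff_of_index_two hind
  set ρ := tateRho H g with hρdef
  set T := tateT H g fbar with hTdef
  have hρmemiff : ∀ x : G, ρ x ∈ H ↔ x ∈ H := by
    intro x
    by_cases hx : x ∈ H <;> simp [hρdef, tateRho, hx, hg, H.one_mem]
  have hρmem : ∀ x : G, x * (ρ x)⁻¹ ∈ H := by
    intro x
    rw [hmul, inv_mem_iff, hρmemiff]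
  have hρcongr : ∀ x y : G, (x ∈ H ↔ y ∈ H) → ρ x = ρ y :=
    fun x y h => tateRho_congr H g h
  have hT1 : ∀ x : G, x ∈ H → ρ x = 1 := fun x hx => if_pos hx
  have hTg : ∀ x : G, x ∉ H → ρ x = g := fun x hx => if_neg hx
  -- f = T 1 * T g
  have hfT : ∀ s₁ s₂ : G, f s₁ s₂ = T 1 s₁ s₂ * T g s₁ s₂ := by
    intro s₁ s₂
    by_cases h1 : s₁ ∈ H <;> by_cases h2 : s₂ ∈ H
    · have h12 : s₁ * s₂ ∈ H := H.mul_mem h1 h2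
      have hg1 : g * s₁ ∉ H := by rw [hmul]; tauto
      have hg12 : g * s₁ * s₂ ∉ H := by rw [hmul]; tauto
      rw [hHH s₁ h1 s₂ h2, hTdef, tateT, tateT, ← hρdef,
        hT1 _ (by simpa using h1), hT1 _ (by simpa using h12), hTg _ hg1, hTg _ hg12]
      simp
    · have h12 : s₁ * s₂ ∉ H := by rw [hmul]; tauto
      have hg1 : g * s₁ ∉ H := by rw [hmul]; tauto
      have hg12 : g * s₁ * s₂ ∈ H := by rw [hmul]; tauto
      rw [hHg s₁ s₂ h1 h2, hTdef, tateT, tateT, ← hρdef,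
        hT1 _ (by simpa using h1), hTg _ (by simpa using h12), hTg _ hg1, hT1 _ hg12]
      simp
    · have h12 : s₁ * s₂ ∉ H := by rw [hmul]; tauto
      have hg1 : g * s₁ ∈ H := by rw [hmul]; tauto
      have hg12 : g * s₁ * s₂ ∈ H := by rw [hmul]; tauto
      rw [hgH s₁ s₂ h1 h2, hTdef, tateT, tateT, ← hρdef,
        hTg _ (by simpa using h1), hTg _ (by simpa using h12), hT1 _ hg1, hT1 _ hg12]
      simp
    · have h12 : s₁ * s₂ ∈ H := by rw [hmul]; tauto
      have hg1 : g * s₁ ∈ H := by rw [hmul]; tauto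
      have hg12 : g * s₁ * s₂ ∉ H := by rw [hmul]; tauto
      rw [hgg s₁ s₂ h1 h2, hTdef, tateT, tateT, ← hρdef,
        hTg _ (by simpa using h1), hT1 _ (by simpa using h12), hT1 _ hg1, hTg _ hg12]
      simp
  -- per-representative cocycle identity
  have hTcoc : ∀ r s₁ s₂ s₃ : G,
      T r s₁ s₂ * T r (s₁ * s₂) s₃ = T (ρ (r * s₁)) s₂ s₃ * T r s₁ (s₂ * s₃) := by
    intro r s₁ s₂ s₃
    have humem : r * s₁ * (ρ (r * s₁))⁻¹ ∈ H := hρmem _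
    have hvmem : ρ (r * s₁) * s₂ * (ρ (r * s₁ * s₂))⁻¹ ∈ H := by
      simp only [hmul, hρmemiff, inv_mem_iff]
    have hwmem : ρ (r * s₁ * s₂) * s₃ * (ρ (r * s₁ * s₂ * s₃))⁻¹ ∈ H := by
      simp only [hmul, hρmemiff, inv_mem_iff]
    have key := hcocycle _ humem _ hvmem _ hwmem
    have e1 : T r s₁ s₂
        = fbar (r * s₁ * (ρ (r * s₁))⁻¹) (ρ (r * s₁) * s₂ * (ρ (r * s₁ * s₂))⁻¹) := rfl
    have e2 : T r (s₁ * s₂) s₃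
        = fbar (r * s₁ * (ρ (r * s₁))⁻¹ * (ρ (r * s₁) * s₂ * (ρ (r * s₁ * s₂))⁻¹))
            (ρ (r * s₁ * s₂) * s₃ * (ρ (r * s₁ * s₂ * s₃))⁻¹) := by
      have m : r * (s₁ * s₂) = r * s₁ * s₂ := by group
      rw [hTdef, tateT, ← hρdef, m]
      congr 1
      group
    have e3 : T (ρ (r * s₁)) s₂ s₃
        = fbar (ρ (r * s₁) * s₂ * (ρ (r * s₁ * s₂))⁻¹)
            (ρ (r * s₁ * s₂) * s₃ * (ρ (r * s₁ * s₂ * s₃))⁻¹) := by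
      have m1 : ρ (r * s₁) * s₂ ∈ H ↔ r * s₁ * s₂ ∈ H := by
        simp only [hmul, hρmemiff]
      have m2 : ρ (r * s₁) * s₂ * s₃ ∈ H ↔ r * s₁ * s₂ * s₃ ∈ H := by
        simp only [hmul, hρmemiff]
      rw [hTdef, tateT, ← hρdef, hρcongr _ _ m1, hρcongr _ _ m2]
    have e4 : T r s₁ (s₂ * s₃)
        = fbar (r * s₁ * (ρ (r * s₁))⁻¹)
            (ρ (r * s₁) * s₂ * (ρ (r * s₁ * s₂))⁻¹
              * (ρ (r * s₁ * s₂) * s₃ * (ρ (r * s₁ * s₂ * s₃))⁻¹)) := by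
      have m : r * s₁ * (s₂ * s₃) = r * s₁ * s₂ * s₃ := by group
      rw [hTdef, tateT, ← hρdef, m]
      congr 1
      group
    rw [e1, e2, e3, e4, key]
  -- combine
  intro s₁ s₂ s₃
  rw [hfT, hfT, hfT, hfT]
  have c1 := hTcoc 1 s₁ s₂ s₃
  have cg := hTcoc g s₁ s₂ s₃
  by_cases h1 : s₁ ∈ H
  · have r1 : ρ (1 * s₁) = 1 := hT1 _ (by simpa using h1)
    have rg : ρ (g * s₁) = g := hTg _ (by rw [hmul]; tauto)
    rw [r1] at c1; rw [rg] at cg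
    calc T 1 s₁ s₂ * T g s₁ s₂ * (T 1 (s₁ * s₂) s₃ * T g (s₁ * s₂) s₃)
        = (T 1 s₁ s₂ * T 1 (s₁ * s₂) s₃) * (T g s₁ s₂ * T g (s₁ * s₂) s₃) :=
          mul_mul_mul_comm _ _ _ _
      _ = (T 1 s₂ s₃ * T 1 s₁ (s₂ * s₃)) * (T g s₂ s₃ * T g s₁ (s₂ * s₃)) := by rw [c1, cg]
      _ = T 1 s₂ s₃ * T g s₂ s₃ * (T 1 s₁ (s₂ * s₃) * T g s₁ (s₂ * s₃)) :=
          mul_mul_mul_comm _ _ _ _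
  · have r1 : ρ (1 * s₁) = g := hTg _ (by simpa using h1)
    have rg : ρ (g * s₁) = 1 := hT1 _ (by rw [hmul]; tauto)
    rw [r1] at c1; rw [rg] at cg
    calc T 1 s₁ s₂ * T g s₁ s₂ * (T 1 (s₁ * s₂) s₃ * T g (s₁ * s₂) s₃)
        = (T 1 s₁ s₂ * T 1 (s₁ * s₂) s₃) * (T g s₁ s₂ * T g (s₁ * s₂) s₃) :=
          mul_mul_mul_comm _ _ _ _
      _ = (T g s₂ s₃ * T 1 s₁ (s₂ * s₃)) * (T 1 s₂ s₃ * T g s₁ (s₂ * s₃)) := by rw [c1, cg]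
      _ = T 1 s₂ s₃ * T g s₂ s₃ * (T 1 s₁ (s₂ * s₃) * T g s₁ (s₂ * s₃)) := by
          simp only [mul_comm, mul_left_comm, mul_assoc]
end

section
/- Let K/k be a finite Galois extension with group F and let 1 → A → G → F → 1 be a group extension where G ≅ (G/N₁) ∧ (G/N₂) is the pullback of G/N₁ and G/N₂ over F = G/(N₁N₂), with A = N₁ × N₂, N₁ ∩ N₂ = {1}. Then the embedding problem (K/k, G, N₁ × N₂) is weakly solvable if and only if both embedding problems (K/k, G/N₁, N₂) and (K/k, G/N₂, N₁) are weakly solvable. -/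
open Pointwise


/-- Let `K/k` be Galois with group `F = G/(N₁N₂)`, where `G` has normal subgroups
`N₁, N₂` with `N₁ ⊓ N₂ = ⊥` (so `G` is the pullback of `G/N₁` and `G/N₂` over `F`, with
kernel `N₁ × N₂`).  Identifying `F` with a quotient `φ : Ω_k → F` of the absolute Galois
group, the embedding problem `(K/k, G, N₁ × N₂)` is weakly solvable iff both
`(K/k, G/N₁, N₂)` and `(K/k, G/N₂, N₁)` are weakly solvable, where (by Theorem 2.1) weak
solvability means the existence of a homomorphism from `Ω_k` lifting `φ`. -/
theorem stmt9 {G Ω : Type*} [Group G] [Group Ω]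
    (N₁ N₂ : Subgroup G) [N₁.Normal] [N₂.Normal] (h : N₁ ⊓ N₂ = ⊥)
    (φ : Ω →* G ⧸ (N₁ ⊔ N₂)) (hφ : Function.Surjective φ) :
    (∃ δ : Ω →* G, (QuotientGroup.mk' (N₁ ⊔ N₂)).comp δ = φ) ↔
      ((∃ δ₁ : Ω →* G ⧸ N₁,
          (QuotientGroup.map N₁ (N₁ ⊔ N₂) (MonoidHom.id G)
            (by simpa using le_sup_left)).comp δ₁ = φ) ∧
       (∃ δ₂ : Ω →* G ⧸ N₂,
          (QuotientGroup.map N₂ (N₁ ⊔ N₂) (MonoidHom.id G)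
            (by simpa using le_sup_right)).comp δ₂ = φ)) := by
  constructor
  · rintro ⟨δ, hδ⟩
    exact ⟨⟨(QuotientGroup.mk' N₁).comp δ, by ext ω; simpa using DFunLike.congr_fun hδ ω⟩,
           ⟨(QuotientGroup.mk' N₂).comp δ, by ext ω; simpa using DFunLike.congr_fun hδ ω⟩⟩
  · rintro ⟨⟨δ₁, hδ₁⟩, ⟨δ₂, hδ₂⟩⟩
    have key : ∀ ω : Ω, ∃! g : G, ((g : G ⧸ N₁) = δ₁ ω ∧ ((g : G ⧸ N₂) = δ₂ ω)) := by
      intro ω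
      obtain ⟨g₁, hg₁⟩ := QuotientGroup.mk_surjective (δ₁ ω)
      obtain ⟨g₂, hg₂⟩ := QuotientGroup.mk_surjective (δ₂ ω)
      have e1 : ((g₁ : G ⧸ (N₁ ⊔ N₂)) : G ⧸ (N₁ ⊔ N₂)) = φ ω := by
        have := DFunLike.congr_fun hδ₁ ω
        simpa [← hg₁] using this
      have e2 : ((g₂ : G ⧸ (N₁ ⊔ N₂)) : G ⧸ (N₁ ⊔ N₂)) = φ ω := by
        have := DFunLike.congr_fun hδ₂ ω
        simpa [← hg₂] using this
      have hmem : g₁⁻¹ * g₂ ∈ N₁ ⊔ N₂ := QuotientGroup.eq.mp (e1.trans e2.symm)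
      have hset : g₁⁻¹ * g₂ ∈ (N₁ : Set G) * (N₂ : Set G) := by
        rw [← Subgroup.mul_normal]; exact hmem
      obtain ⟨n₁, hn₁, n₂, hn₂, hprod⟩ := hset
      refine ⟨g₁ * n₁, ⟨?_, ?_⟩, ?_⟩
      · rw [← hg₁]; exact QuotientGroup.eq.mpr (by simpa using N₁.inv_mem hn₁)
      · rw [← hg₂]
        refine QuotientGroup.eq.mpr ?_
        have hprod' : n₁ * n₂ = g₁⁻¹ * g₂ := hprod
        have heq : (g₁ * n₁)⁻¹ * g₂ = n₂ := by
          calc (g₁ * n₁)⁻¹ * g₂ = n₁⁻¹ * (g₁⁻¹ * g₂) := by group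
            _ = n₁⁻¹ * (n₁ * n₂) := by rw [hprod']
            _ = n₂ := by group
        rw [heq]; exact hn₂
      · rintro g ⟨hq1, hq2⟩
        have m1 : g⁻¹ * (g₁ * n₁) ∈ N₁ := by
          refine QuotientGroup.eq.mp ?_
          rw [hq1, ← hg₁]
          exact (QuotientGroup.eq.mpr (by simpa using N₁.inv_mem hn₁)).symm
        have m2 : g⁻¹ * (g₁ * n₁) ∈ N₂ := by
          refine QuotientGroup.eq.mp ?_
          rw [hq2, ← hg₂]
          refine (QuotientGroup.eq.mpr ?_).symm
          have hprod' : n₁ * n₂ = g₁⁻¹ * g₂ := hprod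
          have heq : (g₁ * n₁)⁻¹ * g₂ = n₂ := by
            calc (g₁ * n₁)⁻¹ * g₂ = n₁⁻¹ * (g₁⁻¹ * g₂) := by group
              _ = n₁⁻¹ * (n₁ * n₂) := by rw [hprod']
              _ = n₂ := by group
          rw [heq]; exact hn₂
        have hb : g⁻¹ * (g₁ * n₁) ∈ N₁ ⊓ N₂ := ⟨m1, m2⟩
        rw [h, Subgroup.mem_bot] at hb
        exact (inv_mul_eq_one.mp hb)
    choose f hf huniq using key
    have hmul : ∀ ω ω' : Ω, f (ω * ω') = f ω * f ω' := by
      intro ω ω'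
      refine (huniq (ω * ω') (f ω * f ω') ?_).symm
      constructor
      · push_cast
        rw [QuotientGroup.mk_mul, (hf ω).1, (hf ω').1, map_mul]
      · rw [QuotientGroup.mk_mul, (hf ω).2, (hf ω').2, map_mul]
    refine ⟨⟨⟨f, ?_⟩, hmul⟩, ?_⟩
    · have := huniq 1 1 ⟨by simp, by simp⟩
      exact this.symm
    · ext ω
      show ((f ω : G ⧸ (N₁ ⊔ N₂))) = φ ω
      have h1 : ((f ω : G ⧸ N₁)) = δ₁ ω := (hf ω).1
      have := DFunLike.congr_fun hδ₁ ω
      rw [MonoidHom.comp_apply] at this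
      rw [← this, ← h1]
      rfl
end
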